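/- The subspace ℋ_{ℤ≤0} of ℋ_ℤ spanned by 1 and all symbols [s₁,…,s_k] with all entries s_i ≤ 0 is closed under the extended shuffle product ⧢ and under J; i.e., (ℋ_{ℤ≤0}, ⧢, J) is a differential subalgebra of (ℋ_ℤ, ⧢, J). -/

import Mathlib

noncomputable section

/-- The vector space ℋ_ℤ with basis the symbols `[s₁,…,s_k]` (lists of integers),
the empty list being the unit `1`. -/
abbrev HZ : Type := List ℤ →₀ ℚ

/-- The basis symbol `[s₁,…,s_k]`. -/
def bs (l : List ℤ) : HZ := Finsupp.single l 1

/-- Linear extension of a map defined on basis symbols. -/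
def hlift (f : List ℤ → HZ) : HZ →ₗ[ℚ] HZ := Finsupp.lift HZ ℚ (List ℤ) f

/-- Prepending a `0` entry to every basis symbol. -/
def preZ : HZ →ₗ[ℚ] HZ := hlift fun l => bs (0 :: l)

/-- The operator `I` adding 1 to the first entry. -/
def Imap : HZ →ₗ[ℚ] HZ := hlift fun l =>
  match l with
  | [] => 0
  | s :: r => bs ((s + 1) :: r)

/-- The operator `J` subtracting 1 from the first entry, with `J(1) = 0`. -/
def Jmap : HZ →ₗ[ℚ] HZ := hlift fun l =>
  match l with
  | [] => 0
  | s :: r => bs ((s - 1) :: r)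

/-- The five-case recursion defining the extended shuffle product on ℋ_ℤ. -/
def IsExtShuffle (m : HZ →ₗ[ℚ] HZ →ₗ[ℚ] HZ) : Prop :=
  (∀ x, m (bs []) x = x) ∧
  (∀ x, m x (bs []) = x) ∧
  (∀ (s' : List ℤ) (t₁ : ℤ) (t' : List ℤ),
    m (bs (0 :: s')) (bs (t₁ :: t')) = preZ (m (bs s') (bs (t₁ :: t')))) ∧
  (∀ (s₁ : ℤ), 0 < s₁ → ∀ (s' t' : List ℤ),
    m (bs (s₁ :: s')) (bs (0 :: t')) = preZ (m (bs (s₁ :: s')) (bs t'))) ∧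
  (∀ (s₁ t₁ : ℤ), 0 < s₁ → 0 < t₁ → ∀ (s' t' : List ℤ),
    m (bs (s₁ :: s')) (bs (t₁ :: t')) =
      Imap (m (bs (s₁ :: s')) (bs ((t₁ - 1) :: t'))) +
      Imap (m (bs ((s₁ - 1) :: s')) (bs (t₁ :: t')))) ∧
  (∀ (s₁ t₁ : ℤ), 0 < s₁ → t₁ < 0 → ∀ (s' t' : List ℤ),
    m (bs (s₁ :: s')) (bs (t₁ :: t')) =
      Jmap (m (bs (s₁ :: s')) (bs ((t₁ + 1) :: t'))) -
      m (bs ((s₁ - 1) :: s')) (bs ((t₁ + 1) :: t'))) ∧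
  (∀ (s₁ : ℤ), s₁ < 0 → ∀ (t₁ : ℤ) (s' t' : List ℤ),
    m (bs (s₁ :: s')) (bs (t₁ :: t')) =
      Jmap (m (bs ((s₁ + 1) :: s')) (bs (t₁ :: t'))) -
      m (bs ((s₁ + 1) :: s')) (bs ((t₁ - 1) :: t')))

/-- The subspace spanned by `1` and the symbols with all entries `≤ 0`. -/
def Hneg : Submodule ℚ HZ :=
  Submodule.span ℚ {x : HZ | ∃ l : List ℤ, (∀ i ∈ l, i ≤ 0) ∧ x = bs l}
/-! On symbols with nonpositive entries the recursion for `⧢` only ever uses two of its cases: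
a leading `0` is split off by `preZ`, and a leading `s₁ < 0` is raised by one at the cost of
applying `J` and lowering `t₁` by one. Both moves keep all entries `≤ 0`, so induction on the
length of `s` and, inside it, downward induction on `s₁` keeps every product inside `ℋ_{ℤ≤0}`. -/

lemma hlift_bs (f : List ℤ → HZ) (l : List ℤ) : hlift f (bs l) = f l := by
  simp [hlift, bs]

lemma preZ_bs (l : List ℤ) : preZ (bs l) = bs (0 :: l) := hlift_bs _ _

lemma Jmap_bs_nil : Jmap (bs []) = 0 := hlift_bs _ _

lemma Jmap_bs_cons (s : ℤ) (r : List ℤ) : Jmap (bs (s :: r)) = bs ((s - 1) :: r) := hlift_bs _ _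

namespace Hneg

lemma bs_mem {l : List ℤ} (hl : ∀ i ∈ l, i ≤ 0) : bs l ∈ Hneg :=
  Submodule.subset_span ⟨l, hl, rfl⟩

lemma map_mem_of_bs_mem {f : HZ →ₗ[ℚ] HZ} (hf : ∀ l : List ℤ, (∀ i ∈ l, i ≤ 0) → f (bs l) ∈ Hneg)
    {x : HZ} (hx : x ∈ Hneg) : f x ∈ Hneg :=
  (Submodule.span_le (p := Hneg.comap f)).2 (by rintro _ ⟨l, hl, rfl⟩; exact hf l hl) hx

lemma bilin_mem_of_bs_mem {m : HZ →ₗ[ℚ] HZ →ₗ[ℚ] HZ}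
    (hm : ∀ s t : List ℤ, (∀ i ∈ s, i ≤ 0) → (∀ i ∈ t, i ≤ 0) → m (bs s) (bs t) ∈ Hneg)
    {a b : HZ} (ha : a ∈ Hneg) (hb : b ∈ Hneg) : m a b ∈ Hneg :=
  map_mem_of_bs_mem (f := m.flip b)
    (fun s hs => map_mem_of_bs_mem (f := m (bs s)) (fun t ht => hm s t hs ht) hb) ha

lemma preZ_mem {x : HZ} (hx : x ∈ Hneg) : preZ x ∈ Hneg :=
  map_mem_of_bs_mem (fun l hl => by
    rw [preZ_bs]
    exact bs_mem (List.forall_mem_cons.2 ⟨le_rfl, hl⟩)) hx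

lemma Jmap_mem {x : HZ} (hx : x ∈ Hneg) : Jmap x ∈ Hneg := by
  refine map_mem_of_bs_mem (fun l hl => ?_) hx
  cases l with
  | nil => rw [Jmap_bs_nil]; exact zero_mem _
  | cons s r =>
    obtain ⟨hs, hr⟩ := List.forall_mem_cons.1 hl
    rw [Jmap_bs_cons]
    exact bs_mem (List.forall_mem_cons.2 ⟨by omega, hr⟩)

end Hneg

namespace IsExtShuffle

variable {m : HZ →ₗ[ℚ] HZ →ₗ[ℚ] HZ}

lemma cons_mul_bs_mem_Hneg (hm : IsExtShuffle m) {s' : List ℤ} (hs' : ∀ i ∈ s', i ≤ 0)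
    (ih : ∀ t : List ℤ, (∀ i ∈ t, i ≤ 0) → m (bs s') (bs t) ∈ Hneg)
    (s₁ : ℤ) (hs₁ : s₁ ≤ 0) (t : List ℤ) (ht : ∀ i ∈ t, i ≤ 0) :
    m (bs (s₁ :: s')) (bs t) ∈ Hneg := by
  obtain ⟨-, hunit, hzero, -, -, -, hneg⟩ := hm
  cases t with
  | nil => rw [hunit]; exact Hneg.bs_mem (List.forall_mem_cons.2 ⟨hs₁, hs'⟩)
  | cons t₁ t' =>
    induction s₁, hs₁ using Int.leInductionDown generalizing t₁ t' with
    | base => rw [hzero]; exact Hneg.preZ_mem (ih _ ht)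
    | pred n hn ihn =>
      obtain ⟨ht₁, ht'⟩ := List.forall_mem_cons.1 ht
      rw [hneg (n - 1) (by omega), sub_add_cancel]
      exact sub_mem (Hneg.Jmap_mem (ihn t₁ t' ht))
        (ihn (t₁ - 1) t' (List.forall_mem_cons.2 ⟨by omega, ht'⟩))

lemma bs_mul_bs_mem_Hneg (hm : IsExtShuffle m) (s t : List ℤ) (hs : ∀ i ∈ s, i ≤ 0)
    (ht : ∀ i ∈ t, i ≤ 0) : m (bs s) (bs t) ∈ Hneg := by
  induction s generalizing t with
  | nil => rw [hm.1]; exact Hneg.bs_mem ht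
  | cons s₁ s' ih =>
    obtain ⟨hs₁, hs'⟩ := List.forall_mem_cons.1 hs
    exact hm.cons_mul_bs_mem_Hneg hs' (fun t ht => ih t hs' ht) s₁ hs₁ t ht

end IsExtShuffle

/-- `(ℋ_{ℤ≤0}, ⧢, J)` is a differential subalgebra of `(ℋ_ℤ, ⧢, J)`. -/
theorem Hneg_differential_subalgebra (m : HZ →ₗ[ℚ] HZ →ₗ[ℚ] HZ) (hm : IsExtShuffle m) :
    (∀ a ∈ Hneg, ∀ b ∈ Hneg, m a b ∈ Hneg) ∧ (∀ a ∈ Hneg, Jmap a ∈ Hneg) := by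
  exact ⟨fun _ ha _ hb => Hneg.bilin_mem_of_bs_mem hm.bs_mul_bs_mem_Hneg ha hb, fun _ => Hneg.Jmap_mem⟩
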